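/- Let φ : Fin j → Fin m be a weakly increasing (monotone) map and r : Fin j → ℝ with r k > 0 for every k; set S = ∑_k r k. Define the global subdivision points t_k = (∑_{k' : (k' : ℕ) < k} r k')/S for k = 0, …, j; the block sums R_i = ∑_{k' : φ k' = i} r k' for i : Fin m; and the outer subdivision points T_i = (∑_{i' : (i' : ℕ) < i} R_{i'})/S for i = 0, …, m. For k : Fin j with φ k = i, define the within-block points u⁻_k = (∑_{k' < k, φ k' = i} r k')/R_i and u⁺_k = (∑_{k' ≤ k, φ k' = i} r k')/R_i. Then for every k : Fin j with φ k = i one has T_i + (T_{i+1} − T_i)·u⁻_k = t_k and T_i + (T_{i+1} − T_i)·u⁺_k = t_{k+1}. In other words, the increasing affine map taking [0,1] onto [T_i, T_{i+1}] carries the within-block proportional subdivision of block i onto the corresponding global proportional subdivision intervals. -/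
import Mathlib


/-- Coherence of proportional subdivision under grouping by a monotone map
`φ : Fin j → Fin m`: subdividing `[0,1]` proportionally to the block sums and
then subdividing each block proportionally to the lengths within it recovers
the global proportional subdivision. -/
theorem proportional_subdivision_blocks
    (j m : ℕ) (φ : Fin j → Fin m) (hφ : Monotone φ)
    (r : Fin j → ℝ) (hr : ∀ k, 0 < r k) :
    let S : ℝ := ∑ k, r k
    -- global subdivision points
    let t : ℕ → ℝ := fun k =>
      (∑ k' ∈ Finset.univ.filter (fun k' : Fin j => (k' : ℕ) < k), r k') / S
    -- block sums
    let Rblk : Fin m → ℝ := fun i =>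
      ∑ k' ∈ Finset.univ.filter (fun k' : Fin j => φ k' = i), r k'
    -- outer subdivision points
    let T : ℕ → ℝ := fun i =>
      (∑ i' ∈ Finset.univ.filter (fun i' : Fin m => (i' : ℕ) < i), Rblk i') / S
    -- within-block subdivision points
    let um : Fin j → ℝ := fun k =>
      (∑ k' ∈ Finset.univ.filter (fun k' : Fin j => k' < k ∧ φ k' = φ k), r k') /
        Rblk (φ k)
    let up : Fin j → ℝ := fun k =>
      (∑ k' ∈ Finset.univ.filter (fun k' : Fin j => k' ≤ k ∧ φ k' = φ k), r k') /
        Rblk (φ k)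
    ∀ k : Fin j,
      T (φ k) + (T ((φ k : ℕ) + 1) - T (φ k)) * um k = t k ∧
      T (φ k) + (T ((φ k : ℕ) + 1) - T (φ k)) * up k = t ((k : ℕ) + 1) := by
  intro S t Rblk T um up k
  have hS : 0 < S := Finset.sum_pos (fun k _ => hr k) ⟨k, Finset.mem_univ k⟩
  have hRb : 0 < Rblk (φ k) :=
    Finset.sum_pos (fun k' _ => hr k') ⟨k, by simp⟩
  set A : ℝ := ∑ k' ∈ Finset.univ.filter (fun k' : Fin j => (φ k' : ℕ) < (φ k : ℕ)), r k'
    with hAdef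
  -- outer partial sums as global sums over fibers
  have hA : ∀ n : ℕ,
      (∑ i' ∈ Finset.univ.filter (fun i' : Fin m => (i' : ℕ) < n), Rblk i')
        = ∑ k' ∈ Finset.univ.filter (fun k' : Fin j => (φ k' : ℕ) < n), r k' := by
    intro n
    rw [Finset.sum_fiberwise_eq_sum_filter Finset.univ
        (Finset.univ.filter (fun i' : Fin m => (i' : ℕ) < n)) φ r]
    congr 1
    ext k'
    simp
  -- the outer increment is the block sum
  have hdiff :
      (∑ k' ∈ Finset.univ.filter (fun k' : Fin j => (φ k' : ℕ) < (φ k : ℕ) + 1), r k')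
        = A + Rblk (φ k) := by
    have he : (Finset.univ.filter (fun k' : Fin j => (φ k' : ℕ) < (φ k : ℕ) + 1))
        = (Finset.univ.filter (fun k' : Fin j => (φ k' : ℕ) < (φ k : ℕ)))
          ∪ (Finset.univ.filter (fun k' : Fin j => φ k' = φ k)) := by
      ext k'
      simp only [Finset.mem_filter, Finset.mem_union, Finset.mem_univ, true_and]
      constructor
      · intro h
        rcases Nat.lt_succ_iff_lt_or_eq.mp h with h | h
        · exact Or.inl h
        · exact Or.inr (Fin.ext h)
      · rintro (h | h)
        · omega
        · rw [h]; omega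
    rw [he, Finset.sum_union]
    rw [Finset.disjoint_filter]
    intro k' _ h h'
    rw [h'] at h; omega
  -- split lemmas
  have hsplit1 :
      A + (∑ k' ∈ Finset.univ.filter (fun k' : Fin j => k' < k ∧ φ k' = φ k), r k')
        = ∑ k' ∈ Finset.univ.filter (fun k' : Fin j => (k' : ℕ) < (k : ℕ)), r k' := by
    rw [hAdef, ← Finset.sum_union]
    · congr 1
      ext k'
      simp only [Finset.mem_filter, Finset.mem_union, Finset.mem_univ, true_and]
      constructor
      · rintro (h | ⟨h, _⟩)
        · exact Fin.lt_def.mp (hφ.reflect_lt (Fin.lt_def.mpr h))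
        · exact Fin.lt_def.mp h
      · intro h
        rcases lt_or_eq_of_le (hφ (le_of_lt (Fin.lt_def.mpr h))) with h' | h'
        · exact Or.inl (Fin.lt_def.mp h')
        · exact Or.inr ⟨Fin.lt_def.mpr h, h'⟩
    · rw [Finset.disjoint_filter]
      rintro k' _ h ⟨_, h'⟩
      rw [h'] at h; omega
  have hsplit2 :
      A + (∑ k' ∈ Finset.univ.filter (fun k' : Fin j => k' ≤ k ∧ φ k' = φ k), r k')
        = ∑ k' ∈ Finset.univ.filter (fun k' : Fin j => (k' : ℕ) < (k : ℕ) + 1), r k' := by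
    rw [hAdef, ← Finset.sum_union]
    · congr 1
      ext k'
      simp only [Finset.mem_filter, Finset.mem_union, Finset.mem_univ, true_and]
      constructor
      · rintro (h | ⟨h, _⟩)
        · have := hφ.reflect_lt (Fin.lt_def.mpr h)
          omega
        · have := Fin.le_def.mp h
          omega
      · intro h
        have hle : k' ≤ k := Fin.le_def.mpr (by omega)
        rcases lt_or_eq_of_le (hφ hle) with h' | h'
        · exact Or.inl (Fin.lt_def.mp h')
        · exact Or.inr ⟨hle, h'⟩
    · rw [Finset.disjoint_filter]
      rintro k' _ h ⟨_, h'⟩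
      rw [h'] at h; omega
  have hT0 : T (φ k : ℕ) = A / S := by
    show _ / S = _
    rw [hA]
  have hT1 : T ((φ k : ℕ) + 1) = (A + Rblk (φ k)) / S := by
    show _ / S = _
    rw [hA, hdiff]
  constructor
  · show T (φ k : ℕ) + (T ((φ k : ℕ) + 1) - T (φ k : ℕ)) *
      ((∑ k' ∈ Finset.univ.filter (fun k' : Fin j => k' < k ∧ φ k' = φ k), r k') /
        Rblk (φ k)) = _
    rw [hT0, hT1]
    show _ = _ / S
    rw [← hsplit1]
    field_simp
    ring
  · show T (φ k : ℕ) + (T ((φ k : ℕ) + 1) - T (φ k : ℕ)) *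
      ((∑ k' ∈ Finset.univ.filter (fun k' : Fin j => k' ≤ k ∧ φ k' = φ k), r k') /
        Rblk (φ k)) = _
    rw [hT0, hT1]
    show _ = _ / S
    rw [← hsplit2]
    field_simp
    ring
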